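/- arXiv:2603.03425 — 4 statements merged into one kernel-verified Lean document; each statement's English description precedes it below -/
import Mathlib

section
/- Let m : \mathbb{N} \to \mathbb{N} satisfy m(1) = 1 and m(n) = \sum_{k=1}^{n-1} (k+1) m(k) m(n-k) for n \geq 2, and let M(x) = \sum_{n \geq 2} m(n-1) x^n be the corresponding formal power series. Then M satisfies the differential equation M(x) = x^2 + M(x) \cdot M'(x) as formal power series. -/
open PowerSeries

/-- If `m` satisfies the Matryoshka recurrence and
`M(x) = ∑_{n ≥ 2} m(n-1) xⁿ`, then `M = x² + M · M'` as formal power series. -/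
theorem stmt_1 (m : ℕ → ℕ) (h0 : m 0 = 0) (h1 : m 1 = 1)
    (hrec : ∀ n, 2 ≤ n → m n = ∑ k ∈ Finset.Ico 1 n, (k + 1) * m k * m (n - k))
    (M : PowerSeries ℚ)
    (hM : ∀ n : ℕ, coeff n M = if 2 ≤ n then (m (n - 1) : ℚ) else 0) :
    M = X ^ 2 + M * (PowerSeries.derivative ℚ M) := by
  ext n
  rw [map_add, PowerSeries.coeff_mul, coeff_X_pow, hM]
  have hsum : ∑ p ∈ Finset.HasAntidiagonal.antidiagonal n,
      coeff p.1 M * coeff p.2 (PowerSeries.derivative ℚ M)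
      = ∑ k ∈ Finset.range (n + 1),
        (if 2 ≤ k ∧ k < n then (m (k - 1) : ℚ) * m (n - k) * ((n - k : ℕ) + 1) else 0) := by
    rw [Finset.Nat.sum_antidiagonal_eq_sum_range_succ_mk]
    refine Finset.sum_congr rfl fun k hk => ?_
    rw [Finset.mem_range] at hk
    rw [PowerSeries.coeff_derivative, hM, hM]
    by_cases h : 2 ≤ k ∧ k < n
    · rw [if_pos h, if_pos h.1, if_pos (by omega : 2 ≤ n - k + 1)]
      have : n - k + 1 - 1 = n - k := by omega
      rw [this]
      ring
    · rw [if_neg h]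
      rcases not_and_or.mp h with h' | h'
      · rw [if_neg h', zero_mul]
      · rw [if_neg (by omega : ¬ 2 ≤ n - k + 1), zero_mul, mul_zero]
  rw [hsum]
  have hsum2 : ∑ k ∈ Finset.range (n + 1),
      (if 2 ≤ k ∧ k < n then (m (k - 1) : ℚ) * m (n - k) * ((n - k : ℕ) + 1) else 0)
      = ∑ k ∈ Finset.Ico 2 n, (m (k - 1) : ℚ) * m (n - k) * ((n - k : ℕ) + 1) := by
    rw [← Finset.sum_filter]
    refine Finset.sum_congr ?_ fun _ _ => rfl
    ext k
    simp only [Finset.mem_filter, Finset.mem_range, Finset.mem_Ico]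
    omega
  rw [hsum2]
  have hre : ∑ k ∈ Finset.Ico 2 n, (m (k - 1) : ℚ) * m (n - k) * ((n - k : ℕ) + 1)
      = ∑ j ∈ Finset.Ico 1 (n - 1), ((j + 1 : ℚ) * m j * m (n - 1 - j)) := by
    refine Finset.sum_nbij' (fun k => n - k) (fun j => n - j) ?_ ?_ ?_ ?_ ?_
    · intro k hk
      rw [Finset.mem_Ico] at *
      omega
    · intro j hj
      rw [Finset.mem_Ico] at *
      omega
    · intro k hk
      rw [Finset.mem_Ico] at hk
      omega
    · intro j hj
      rw [Finset.mem_Ico] at hj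
      omega
    · intro k hk
      rw [Finset.mem_Ico] at hk
      have h2 : n - 1 - (n - k) = k - 1 := by omega
      rw [h2]
      ring
  rw [hre]
  rcases lt_or_ge n 2 with hn | hn
  · rw [if_neg (by omega)]
    have : Finset.Ico 1 (n - 1) = ∅ := by
      apply Finset.Ico_eq_empty; omega
    rw [this, Finset.sum_empty, if_neg (by omega), add_zero]
  rw [if_pos hn]
  rcases eq_or_lt_of_le hn with h2 | h3
  · subst h2
    norm_num [h1]
  · rw [if_neg (by omega), zero_add]
    have := hrec (n - 1) (by omega)
    rw [this]
    push_cast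
    refine Finset.sum_congr rfl fun j hj => ?_
    ring
end

section
/- In any triangulation of a convex polygon, each diagonal of the polygon transversally crosses exactly one triangle of the triangulation. Here a diagonal ij transversally crosses a triangle with vertices u < v < w (with respect to a fixed labeling 0,1,...,n+1) if and only if u \leq i < v < j \leq w. -/
/-- `(i, j)` is a diagonal of the `(n+2)`-gon with vertices `0, …, n+1`
(non-adjacent vertices; the base edge `(0, n+1)` is excluded). -/
def IsDiag (n : ℕ) (d : ℕ × ℕ) : Prop :=
  d.1 + 1 < d.2 ∧ d.2 ≤ n + 1 ∧ ¬(d.1 = 0 ∧ d.2 = n + 1)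

/-- Two diagonals cross. -/
def Crosses (d e : ℕ × ℕ) : Prop :=
  (d.1 < e.1 ∧ e.1 < d.2 ∧ d.2 < e.2) ∨ (e.1 < d.1 ∧ d.1 < e.2 ∧ e.2 < d.2)

/-- A triangulation of the `(n+2)`-gon: a set of `n-1` pairwise non-crossing diagonals. -/
def IsTriangulation (n : ℕ) (S : Finset (ℕ × ℕ)) : Prop :=
  (∀ d ∈ S, IsDiag n d) ∧ (∀ d ∈ S, ∀ e ∈ S, d ≠ e → ¬Crosses d e) ∧ S.card = n - 1

/-- `(a, b)` is an arc of the subdivision: a polygon side or a diagonal of `S`. -/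
def IsArc (n : ℕ) (S : Finset (ℕ × ℕ)) (a b : ℕ) : Prop :=
  a < b ∧ b ≤ n + 1 ∧ (b = a + 1 ∨ (a = 0 ∧ b = n + 1) ∨ (a, b) ∈ S)

lemma crosses_symm {d e : ℕ × ℕ} (h : Crosses d e) : Crosses e d := by
  rcases h with h | h
  · exact Or.inr ⟨h.1, h.2.1, h.2.2⟩
  · exact Or.inl ⟨h.1, h.2.1, h.2.2⟩

/-- The key cardinality bound: in a pairwise non-crossing family of diagonals,
the number of members lying within `[a, b]` and different from `(a, b)` itself
is at most `b - a - 2`. -/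
lemma Wbound (S : Finset (ℕ × ℕ)) (hd : ∀ d ∈ S, d.1 + 1 < d.2)
    (hnc : ∀ d ∈ S, ∀ e ∈ S, d ≠ e → ¬Crosses d e) :
    ∀ N a b : ℕ, b - a ≤ N →
      (S.filter (fun d => a ≤ d.1 ∧ d.2 ≤ b ∧ d ≠ (a, b))).card ≤ b - a - 2 := by
  intro N
  induction N with
  | zero =>
    intro a b hba
    have hemp : (S.filter (fun d => a ≤ d.1 ∧ d.2 ≤ b ∧ d ≠ (a, b))) = ∅ := by
      rw [Finset.filter_eq_empty_iff]
      rintro d hdS ⟨h1, h2, _⟩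
      have h3 := hd d hdS
      omega
    simp [hemp]
  | succ N ih =>
    intro a b hba
    -- helper: bound including the chord, on strictly smaller intervals
    have Vsmall : ∀ a' b' : ℕ, b' - a' ≤ N →
        (S.filter (fun d => a' ≤ d.1 ∧ d.2 ≤ b')).card ≤ b' - a' - 1 := by
      intro a' b' h
      have h2 := ih a' b' h
      have hsub : S.filter (fun d => a' ≤ d.1 ∧ d.2 ≤ b') ⊆
          insert (a', b') (S.filter (fun d => a' ≤ d.1 ∧ d.2 ≤ b' ∧ d ≠ (a', b'))) := by
        intro d hd'
        rw [Finset.mem_filter] at hd'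
        rw [Finset.mem_insert]
        by_cases hda : d = (a', b')
        · exact Or.inl hda
        · exact Or.inr (Finset.mem_filter.2 ⟨hd'.1, hd'.2.1, hd'.2.2, hda⟩)
      have hcard := Finset.card_le_card hsub
      have hins := Finset.card_insert_le (a', b')
        (S.filter (fun d => a' ≤ d.1 ∧ d.2 ≤ b' ∧ d ≠ (a', b')))
      by_cases hb' : a' + 2 ≤ b'
      · omega
      · have hemp : S.filter (fun d => a' ≤ d.1 ∧ d.2 ≤ b') = ∅ := by
          rw [Finset.filter_eq_empty_iff]
          rintro d hdS ⟨hx, hy⟩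
          have h3 := hd d hdS
          omega
        simp [hemp]
    set W := S.filter (fun d => a ≤ d.1 ∧ d.2 ≤ b ∧ d ≠ (a, b)) with hWdef
    by_cases hWe : W = ∅
    · rw [hWe]; simp
    · obtain ⟨pq, hpqW, hmax⟩ :=
        Finset.exists_max_image W (fun d => d.2 - d.1) (Finset.nonempty_iff_ne_empty.2 hWe)
      obtain ⟨p, q⟩ := pq
      have hpq := Finset.mem_filter.1 hpqW
      have hpqS : (p, q) ∈ S := hpq.1
      have hap : a ≤ p := hpq.2.1
      have hqb : q ≤ b := hpq.2.2.1
      have hne : (p, q) ≠ (a, b) := hpq.2.2.2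
      have hplq : p + 1 < q := hd _ hpqS
      have hcase : a < p ∨ q < b := by
        have : ¬(p = a ∧ q = b) := by
          intro h; exact hne (by rw [h.1, h.2])
        omega
      rcases hcase with hcase | hcase
      · -- split at p
        have hsplit : ∀ e ∈ W, e.2 ≤ p ∨ p ≤ e.1 := by
          rintro ⟨x, y⟩ heW
          by_contra hcon
          push_neg at hcon
          obtain ⟨h1, h2⟩ := hcon
          -- p < y, x < p
          have he := Finset.mem_filter.1 heW
          have heS : (x, y) ∈ S := he.1
          have hxy := hd _ heS
          have hne' : (x, y) ≠ (p, q) := by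
            intro hh
            rw [Prod.mk.injEq] at hh
            omega
          have hnc' := hnc _ heS _ hpqS hne'
          have hyq : q ≤ y := by
            by_contra hyq
            push_neg at hyq
            exact hnc' (Or.inl ⟨h2, h1, hyq⟩)
          have hm := hmax (x, y) heW
          simp only at hm
          omega
        have hsub : W ⊆ (S.filter fun d => a ≤ d.1 ∧ d.2 ≤ p) ∪
            (S.filter fun d => p ≤ d.1 ∧ d.2 ≤ b) := by
          rintro ⟨x, y⟩ heW
          have he := Finset.mem_filter.1 heW
          rcases hsplit _ heW with h | h
          · exact Finset.mem_union_left _ (Finset.mem_filter.2 ⟨he.1, he.2.1, h⟩)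
          · exact Finset.mem_union_right _ (Finset.mem_filter.2 ⟨he.1, h, he.2.2.1⟩)
        have c1 := Vsmall a p (by omega)
        have c2 := Vsmall p b (by omega)
        have := Finset.card_le_card hsub
        have hu := Finset.card_union_le (S.filter fun d => a ≤ d.1 ∧ d.2 ≤ p)
          (S.filter fun d => p ≤ d.1 ∧ d.2 ≤ b)
        omega
      · -- split at q
        have hsplit : ∀ e ∈ W, e.2 ≤ q ∨ q ≤ e.1 := by
          rintro ⟨x, y⟩ heW
          by_contra hcon
          push_neg at hcon
          obtain ⟨h1, h2⟩ := hcon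
          -- q < y, x < q
          have he := Finset.mem_filter.1 heW
          have heS : (x, y) ∈ S := he.1
          have hxy := hd _ heS
          have hne' : (x, y) ≠ (p, q) := by
            intro hh
            rw [Prod.mk.injEq] at hh
            omega
          have hnc' := hnc _ heS _ hpqS hne'
          have hxp : x ≤ p := by
            by_contra hxp
            push_neg at hxp
            exact hnc' (Or.inr ⟨hxp, h2, h1⟩)
          have hm := hmax (x, y) heW
          simp only at hm
          omega
        have hsub : W ⊆ (S.filter fun d => a ≤ d.1 ∧ d.2 ≤ q) ∪
            (S.filter fun d => q ≤ d.1 ∧ d.2 ≤ b) := by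
          rintro ⟨x, y⟩ heW
          have he := Finset.mem_filter.1 heW
          rcases hsplit _ heW with h | h
          · exact Finset.mem_union_left _ (Finset.mem_filter.2 ⟨he.1, he.2.1, h⟩)
          · exact Finset.mem_union_right _ (Finset.mem_filter.2 ⟨he.1, h, he.2.2.1⟩)
        have c1 := Vsmall a q (by omega)
        have c2 := Vsmall q b (by omega)
        have := Finset.card_le_card hsub
        have hu := Finset.card_union_le (S.filter fun d => a ≤ d.1 ∧ d.2 ≤ q)
          (S.filter fun d => q ≤ d.1 ∧ d.2 ≤ b)
        omega

lemma isArc_of_mem {n : ℕ} {S : Finset (ℕ × ℕ)} (hS : IsTriangulation n S) {a b : ℕ}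
    (h : (a, b) ∈ S) : IsArc n S a b := by
  have hd := hS.1 _ h
  have h1 : a + 1 < b := hd.1
  have h2 : b ≤ n + 1 := hd.2.1
  exact ⟨by omega, h2, Or.inr (Or.inr h)⟩

/-- No member of `S` (nor any side or the base) crosses an arc. -/
lemma arc_not_crossed {n : ℕ} {S : Finset (ℕ × ℕ)} (hS : IsTriangulation n S) {a b c d : ℕ}
    (hab : IsArc n S a b) (hcd : IsArc n S c d) : ¬Crosses (a, b) (c, d) := by
  obtain ⟨hab1, hab2, hab3⟩ := hab
  obtain ⟨hcd1, hcd2, hcd3⟩ := hcd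
  rintro (⟨h1, h2, h3⟩ | ⟨h1, h2, h3⟩)
  · -- a < c, c < b, b < d
    rcases hab3 with h | h | habS
    · omega
    · omega
    rcases hcd3 with h' | h' | hcdS
    · omega
    · omega
    exact hS.2.1 _ habS _ hcdS (by intro hh; rw [Prod.mk.injEq] at hh; omega)
      (Or.inl ⟨h1, h2, h3⟩)
  · -- c < a, a < d, d < b
    rcases hcd3 with h' | h' | hcdS
    · omega
    · omega
    rcases hab3 with h | h | habS
    · omega
    · omega
    exact hS.2.1 _ habS _ hcdS (by intro hh; rw [Prod.mk.injEq] at hh; omega)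
      (Or.inr ⟨h1, h2, h3⟩)

/-- Every arc spanning at least two sides is split by some intermediate vertex
into two arcs. -/
lemma arc_split {n : ℕ} {S : Finset (ℕ × ℕ)} (hS : IsTriangulation n S) {a b : ℕ}
    (hab : IsArc n S a b) (h2 : a + 1 < b) :
    ∃ c, a < c ∧ c < b ∧ IsArc n S a c ∧ IsArc n S c b := by
  classical
  set T := (Finset.range b).filter (fun c => a < c ∧ IsArc n S a c) with hTdef
  have hTne : T.Nonempty := by
    refine ⟨a + 1, Finset.mem_filter.2 ⟨Finset.mem_range.2 h2, by omega, ?_⟩⟩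
    exact ⟨by omega, by have := hab.2.1; omega, Or.inl rfl⟩
  set c := T.max' hTne with hcdef
  have hcT := T.max'_mem hTne
  have hcmem := Finset.mem_filter.1 hcT
  have hcb : c < b := Finset.mem_range.1 hcmem.1
  have hac : a < c := hcmem.2.1
  have harcac : IsArc n S a c := hcmem.2.2
  have hcmax : ∀ x ∈ T, x ≤ c := fun x hx => T.le_max' x hx
  refine ⟨c, hac, hcb, harcac, ?_⟩
  by_cases hside : b = c + 1
  · exact ⟨by omega, hab.2.1, Or.inl hside⟩
  have hcb2 : c + 1 < b := by omega
  suffices hmem : (c, b) ∈ S by exact ⟨by omega, hab.2.1, Or.inr (Or.inr hmem)⟩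
  by_contra hno
  set S' := insert (c, b) S with hS'def
  have hd' : ∀ e ∈ S', e.1 + 1 < e.2 := by
    intro e hem
    rcases Finset.mem_insert.1 hem with h | h
    · rw [h]; exact hcb2
    · exact (hS.1 e h).1
  have hncb : ∀ e ∈ S, ¬Crosses (c, b) e := by
    rintro ⟨x, y⟩ heS hcr
    have hearc : IsArc n S x y := isArc_of_mem hS heS
    rcases hcr with ⟨h1, h2', h3⟩ | ⟨h1, h2', h3⟩
    · -- c < x, x < b, b < y
      exact arc_not_crossed hS hab hearc (Or.inl ⟨by omega, h2', h3⟩)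
    · -- x < c, c < y, y < b
      rcases lt_trichotomy x a with hxa | hxa | hxa
      · exact arc_not_crossed hS hab hearc (Or.inr ⟨hxa, by omega, h3⟩)
      · have hyT : y ∈ T := by
          refine Finset.mem_filter.2 ⟨Finset.mem_range.2 h3, by omega, ?_⟩
          rw [← hxa]; exact hearc
        have := hcmax y hyT
        omega
      · exact arc_not_crossed hS harcac hearc (Or.inl ⟨hxa, h1, h2'⟩)
  have hnc' : ∀ d ∈ S', ∀ e ∈ S', d ≠ e → ¬Crosses d e := by
    intro d hdm e hem hne
    rcases Finset.mem_insert.1 hdm with hd1 | hd1 <;> rcases Finset.mem_insert.1 hem with he1 | he1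
    · exact absurd (hd1.trans he1.symm) hne
    · rw [hd1]; exact hncb e he1
    · intro hcr; rw [he1] at hcr; exact hncb d hd1 (crosses_symm hcr)
    · exact hS.2.1 d hd1 e he1 hne
  have hn1 : 1 ≤ n := by have := hab.2.1; omega
  have hcard : S'.card = n := by
    rw [Finset.card_insert_of_notMem hno, hS.2.2]
    omega
  have hbd := Wbound S' hd' hnc' (n + 1) 0 (n + 1) (by omega)
  have hfl : S'.filter (fun d => 0 ≤ d.1 ∧ d.2 ≤ n + 1 ∧ d ≠ (0, n + 1)) = S' := by
    apply Finset.filter_true_of_mem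
    intro e hem
    refine ⟨Nat.zero_le _, ?_, ?_⟩
    · rcases Finset.mem_insert.1 hem with h | h
      · rw [h]; exact hab.2.1
      · exact (hS.1 e h).2.1
    · rcases Finset.mem_insert.1 hem with h | h
      · rw [h]; intro hh; rw [Prod.mk.injEq] at hh; omega
      · intro hh
        exact (hS.1 e h).2.2 ⟨by rw [hh], by rw [hh]⟩
  rw [hfl, hcard] at hbd
  omega

lemma exists_tri {n : ℕ} {S : Finset (ℕ × ℕ)} (hS : IsTriangulation n S) :
    ∀ N a b i j : ℕ, b - a ≤ N → IsArc n S a b → a ≤ i → i + 1 < j → j ≤ b →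
      ∃ u v w, IsArc n S u v ∧ IsArc n S v w ∧ IsArc n S u w ∧
        u ≤ i ∧ i < v ∧ v < j ∧ j ≤ w := by
  intro N
  induction N with
  | zero => intro a b i j h1 _ h3 h4 h5; omega
  | succ N ih =>
    intro a b i j h1 hab h3 h4 h5
    obtain ⟨c, hac, hcb, h_ac, h_cb⟩ := arc_split hS hab (by omega)
    rcases le_or_gt c i with hci | hic
    · exact ih c b i j (by omega) h_cb hci h4 h5
    · rcases le_or_gt j c with hjc | hcj
      · exact ih a c i j (by omega) h_ac h3 h4 hjc
      · exact ⟨a, c, b, h_ac, h_cb, hab, h3, hic, hcj, h5⟩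

/-- Each diagonal `ij` of the polygon transversally crosses exactly one triangle
`u < v < w` of a triangulation, where crossing transversally means `u ≤ i < v < j ≤ w`. -/
theorem stmt_4 (n : ℕ) (S : Finset (ℕ × ℕ)) (hS : IsTriangulation n S)
    (i j : ℕ) (hij : IsDiag n (i, j)) :
    ∃! t : ℕ × ℕ × ℕ,
      (t.1 < t.2.1 ∧ t.2.1 < t.2.2 ∧ IsArc n S t.1 t.2.1 ∧ IsArc n S t.2.1 t.2.2 ∧
        IsArc n S t.1 t.2.2) ∧
        (t.1 ≤ i ∧ i < t.2.1 ∧ t.2.1 < j ∧ j ≤ t.2.2) := by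
  have hij1 : i + 1 < j := hij.1
  have hij2 : j ≤ n + 1 := hij.2.1
  have hbase : IsArc n S 0 (n + 1) := ⟨by omega, le_refl _, Or.inr (Or.inl ⟨rfl, rfl⟩)⟩
  obtain ⟨u, v, w, huv, hvw, huw, h1, h2, h3, h4⟩ :=
    exists_tri hS (n + 1) 0 (n + 1) i j (by omega) hbase (Nat.zero_le _) hij1 hij2
  refine ⟨(u, v, w), ⟨⟨show u < v by omega, show v < w by omega, huv, hvw, huw⟩, h1, h2, h3, h4⟩, ?_⟩
  rintro ⟨u', v', w'⟩ ⟨⟨_, _, huv', hvw', huw'⟩, hb1, hb2, hb3, hb4⟩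
  have h1' : u' ≤ i := hb1
  have h2' : i < v' := hb2
  have h3' : v' < j := hb3
  have h4' : j ≤ w' := hb4
  have hv : v' = v := by
    rcases lt_trichotomy v' v with h | h | h
    · exact absurd (Or.inr ⟨by omega, h, by omega⟩) (arc_not_crossed hS hvw' huv)
    · exact h
    · exact absurd (Or.inr ⟨by omega, h, by omega⟩) (arc_not_crossed hS hvw huv')
  have hu : u' = u := by
    rcases lt_trichotomy u' u with h | h | h
    · exact absurd (Or.inr ⟨h, by omega, by omega⟩) (arc_not_crossed hS huw huv')
    · exact h
    · exact absurd (Or.inr ⟨h, by omega, by omega⟩) (arc_not_crossed hS huw' huv)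
  have hw : w' = w := by
    rcases lt_trichotomy w' w with h | h | h
    · exact absurd (Or.inl ⟨by omega, by omega, h⟩) (arc_not_crossed hS huw' hvw)
    · exact h
    · exact absurd (Or.inl ⟨by omega, by omega, h⟩) (arc_not_crossed hS huw hvw')
  rw [Prod.mk.injEq, Prod.mk.injEq]
  exact ⟨hu, hv, hw⟩
end

section
/- Define polynomials f_n(t) \in \mathbb{Q}[t] by the property that the formal power series A(x) = x - \sum_{n \geq 1} f_n(t) x^{n+1} and B(x) = x + \sum_{n \geq 1} g_n(t) x^{n+1}, where g_n(t) = ((1+t) f_n(t) - 1)/t, are compositional inverses in (\mathbb{Q}(t))[[x]]. Then f_1(t) = 1, f_2(t) = 1 + 2t, f_3(t) = 1 + 10t + 10t^2, and f_4(t) = 1 + 44t + 114t^2 + 72t^3. -/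
open PowerSeries

/-- Composition `f(g(x))` of formal power series (intended for `g` with zero constant
coefficient, in which case `coeff n (g^k) = 0` for `k > n` and this is the usual
composition). -/
noncomputable def PScomp {K : Type*} [Field K] (f g : PowerSeries K) : PowerSeries K :=
  PowerSeries.mk fun n => ∑ k ∈ Finset.range (n + 1), coeff k f * coeff n (g ^ k)

/-- The cosmohedral `f`-polynomials: if `A(x) = x - ∑ fₙ x^(n+1)` and
`B(x) = x + ∑ gₙ x^(n+1)` with `t gₙ = (1+t) fₙ - 1` are compositional inverses over
`ℚ(t)`, then `f₁ = 1`, `f₂ = 1 + 2t`, `f₃ = 1 + 10t + 10t²`,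
`f₄ = 1 + 44t + 114t² + 72t³`. -/
theorem stmt_11 (f g : ℕ → RatFunc ℚ)
    (hrel : ∀ n, 1 ≤ n → RatFunc.X * g n = (1 + RatFunc.X) * f n - 1)
    (A B : PowerSeries (RatFunc ℚ))
    (hA0 : coeff 0 A = 0) (hA1 : coeff 1 A = 1)
    (hA : ∀ n, 1 ≤ n → coeff (n + 1) A = -f n)
    (hB0 : coeff 0 B = 0) (hB1 : coeff 1 B = 1)
    (hB : ∀ n, 1 ≤ n → coeff (n + 1) B = g n)
    (hinv : PScomp A B = X) :
    f 1 = 1 ∧ f 2 = 1 + 2 * RatFunc.X ∧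
      f 3 = 1 + 10 * RatFunc.X + 10 * RatFunc.X ^ 2 ∧
      f 4 = 1 + 44 * RatFunc.X + 114 * RatFunc.X ^ 2 + 72 * RatFunc.X ^ 3 := by
  have ha2 := hA 1 le_rfl; have ha3 := hA 2 (by norm_num); have ha4 := hA 3 (by norm_num)
  have ha5 := hA 4 (by norm_num)
  have hb2 := hB 1 le_rfl; have hb3 := hB 2 (by norm_num); have hb4 := hB 3 (by norm_num)
  have hb5 := hB 4 (by norm_num)
  have e2 := congrArg (coeff 2) hinv
  have e3 := congrArg (coeff 3) hinv
  have e4 := congrArg (coeff 4) hinv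
  have e5 := congrArg (coeff 5) hinv
  simp only [PScomp, coeff_mk, Finset.sum_range_succ, Finset.sum_range_zero, pow_succ,
    pow_zero, one_mul, coeff_mul, Finset.Nat.sum_antidiagonal_eq_sum_range_succ_mk,
    coeff_X, hA0, hA1, ha2, ha3, ha4, ha5, hB0, hB1, hb2, hb3, hb4, hb5] at e2 e3 e4 e5
  norm_num [Finset.sum_range_succ] at e2 e3 e4 e5
  have hr1 := hrel 1 le_rfl; have hr2 := hrel 2 (by norm_num); have hr3 := hrel 3 (by norm_num)
  have hr4 := hrel 4 (by norm_num)
  have hf1 : f 1 = 1 := by linear_combination RatFunc.X * e2 - hr1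
  have hg1 : g 1 = 1 := by linear_combination e2 + hf1
  rw [hf1, hg1] at e3 e4 e5
  have hf2 : f 2 = 1 + 2 * RatFunc.X := by linear_combination RatFunc.X * e3 - hr2
  have hg2 : g 2 = 3 + 2 * RatFunc.X := by linear_combination e3 + hf2
  rw [hf2, hg2] at e4 e5
  have hf3 : f 3 = 1 + 10 * RatFunc.X + 10 * RatFunc.X ^ 2 := by
    linear_combination RatFunc.X * e4 - hr3
  have hg3 : g 3 = 11 + 20 * RatFunc.X + 10 * RatFunc.X ^ 2 := by linear_combination e4 + hf3
  rw [hf3, hg3] at e5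
  have hf4 : f 4 = 1 + 44 * RatFunc.X + 114 * RatFunc.X ^ 2 + 72 * RatFunc.X ^ 3 := by
    linear_combination RatFunc.X * e5 - hr4
  exact ⟨hf1, hf2, hf3, hf4⟩
end

section
/- For a maximal Matryoshka M on an (n+2)-gon, the number of quadrilaterals in M is at least 1 and at most \lfloor 3n/2 \rfloor - n = \lfloor n/2 \rfloor; equivalently the number of facets of \cone(M), namely n - 2 + q(M), ranges between n - 1 and \lfloor 3n/2 \rfloor - 2. -/
open scoped Classical

/-- A finite edge set is connected (as a subgraph / in the line graph): it cannot be
split into two nonempty parts with no shared vertex. -/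
def EdgeConn {V : Type*} (β : Finset (Sym2 V)) : Prop :=
  ∀ γ ⊆ β, γ.Nonempty → γ ≠ β → ∃ e ∈ γ, ∃ f ∈ β \ γ, ∃ v : V, v ∈ e ∧ v ∈ f

/-- A bracket of a graph `G`: a nonempty connected set of edges of `G`. -/
def IsBracket {V : Type*} (G : SimpleGraph V) (β : Finset (Sym2 V)) : Prop :=
  β.Nonempty ∧ (∀ e ∈ β, e ∈ G.edgeSet) ∧ EdgeConn β

/-- Two brackets are compatible: nested, or disjoint (sharing no vertex, hence no edge). -/
def BrCompat {V : Type*} (β₁ β₂ : Finset (Sym2 V)) : Prop :=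
  β₁ ⊆ β₂ ∨ β₂ ⊆ β₁ ∨ ∀ e ∈ β₁, ∀ f ∈ β₂, ∀ v : V, ¬(v ∈ e ∧ v ∈ f)

/-- A bracketing of `G`: a pairwise-compatible family of brackets containing the full
edge set. -/
def IsBracketing {V : Type*} [Fintype V] (G : SimpleGraph V) [DecidableRel G.Adj]
    (B : Finset (Finset (Sym2 V))) : Prop :=
  (∀ β ∈ B, IsBracket G β) ∧ G.edgeFinset ∈ B ∧
    ∀ β₁ ∈ B, ∀ β₂ ∈ B, BrCompat β₁ β₂

/-- A maximal bracketing: no further bracket can be added. -/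
def IsMaxBracketing {V : Type*} [Fintype V] (G : SimpleGraph V) [DecidableRel G.Adj]
    (B : Finset (Finset (Sym2 V))) : Prop :=
  IsBracketing G B ∧
    ∀ β : Finset (Sym2 V), IsBracket G β → (∀ β' ∈ B, BrCompat β β') → β ∈ B

/-- The two endpoints of an edge, as a `Finset`. -/
noncomputable def symEnds {V : Type*} [DecidableEq V] (e : Sym2 V) : Finset V :=
  Sym2.lift ⟨fun a b => ({a, b} : Finset V), fun a b => Finset.pair_comm a b⟩ e

lemma mem_symEnds {V : Type*} [DecidableEq V] (e : Sym2 V) (v : V) :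
    v ∈ symEnds e ↔ v ∈ e := by
  induction e using Sym2.ind with
  | _ a b => simp [symEnds, Sym2.mem_iff]

lemma card_symEnds {V : Type*} [DecidableEq V] (e : Sym2 V) (he : ¬ e.IsDiag) :
    (symEnds e).card = 2 := by
  induction e using Sym2.ind with
  | _ a b =>
    rw [Sym2.mk_isDiag_iff] at he
    simp [symEnds, Finset.card_pair he]

/-- In any maximal bracketing of a tree with `n - 1 ≥ 1` edges, the number of minimal
(single-edge) brackets is at least `1` and at most `⌊n/2⌋`. -/
theorem stmt_13 {V : Type*} [Fintype V] [DecidableEq V] (G : SimpleGraph V)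
    [DecidableRel G.Adj] (hT : G.IsTree) (n : ℕ) (hn : 2 ≤ n)
    (hm : G.edgeFinset.card = n - 1)
    (B : Finset (Finset (Sym2 V))) (hB : IsMaxBracketing G B) :
    1 ≤ (B.filter (fun β => β.card = 1)).card ∧
      (B.filter (fun β => β.card = 1)).card ≤ n / 2 := by
  obtain ⟨⟨hbr, hfull, hcompat⟩, hmax⟩ := hB
  have hcardV : Fintype.card V = n := by
    have := hT.card_edgeFinset
    omega
  constructor
  · -- lower bound: take a bracket of minimal cardinality, any of its edges is a
    -- singleton bracket compatible with everything
    have hBne : B.Nonempty := ⟨_, hfull⟩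
    obtain ⟨β, hβB, hβmin⟩ := B.exists_min_image Finset.card hBne
    obtain ⟨hβne, hβE, _⟩ := hbr β hβB
    obtain ⟨e, he⟩ := hβne
    have hsingle : IsBracket G {e} := by
      refine ⟨Finset.singleton_nonempty e, ?_, ?_⟩
      · intro f hf
        rw [Finset.mem_singleton] at hf
        exact hf ▸ hβE e he
      · intro γ hγ hγne hγne'
        exact absurd (Finset.Nonempty.subset_singleton_iff hγne |>.mp hγ) hγne'
    have hcomp : ∀ β' ∈ B, BrCompat {e} β' := by
      intro β' hβ'
      rcases hcompat β hβB β' hβ' with h | h | h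
      · exact Or.inl (Finset.singleton_subset_iff.mpr (h he))
      · -- β' ⊆ β, with β minimal in card, so β' = β (else card β' < card β)
        have : β' = β := by
          refine Finset.eq_of_subset_of_card_le h ?_
          exact hβmin β' hβ'
        exact Or.inl (this ▸ Finset.singleton_subset_iff.mpr he)
      · refine Or.inr (Or.inr ?_)
        intro f hf g hg v hv
        rw [Finset.mem_singleton] at hf
        exact h f (hf ▸ he) g hg v hv
    have hmem : ({e} : Finset (Sym2 V)) ∈ B := hmax _ hsingle hcomp
    have : ({e} : Finset (Sym2 V)) ∈ B.filter (fun β => β.card = 1) := by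
      simp [hmem]
    exact Finset.card_pos.mpr ⟨_, this⟩
  · -- upper bound: singleton brackets give pairwise vertex-disjoint edges
    set S := B.filter (fun β => β.card = 1) with hS
    have key : 2 * S.card ≤ Fintype.card V := by
      have hdisj : ∀ β₁ ∈ S, ∀ β₂ ∈ S, β₁ ≠ β₂ →
          Disjoint (β₁.biUnion symEnds) (β₂.biUnion symEnds) := by
        intro β₁ h₁ β₂ h₂ hne
        rw [hS, Finset.mem_filter] at h₁ h₂
        rcases hcompat β₁ h₁.1 β₂ h₂.1 with h | h | h
        · exact absurd (Finset.eq_of_subset_of_card_le h (le_of_eq (h₂.2.trans h₁.2.symm))) hne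
        · exact absurd (Finset.eq_of_subset_of_card_le h (le_of_eq (h₁.2.trans h₂.2.symm))).symm hne
        · rw [Finset.disjoint_left]
          intro v hv₁ hv₂
          simp only [Finset.mem_biUnion, mem_symEnds] at hv₁ hv₂
          obtain ⟨e, he, hve⟩ := hv₁
          obtain ⟨f, hf, hvf⟩ := hv₂
          exact h e he f hf v ⟨hve, hvf⟩
      have hcards : ∀ β ∈ S, (β.biUnion symEnds).card = 2 := by
        intro β hβ
        rw [hS, Finset.mem_filter] at hβ
        obtain ⟨e, rfl⟩ := Finset.card_eq_one.mp hβ.2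
        rw [Finset.singleton_biUnion]
        exact card_symEnds e (G.not_isDiag_of_mem_edgeSet ((hbr _ hβ.1).2.1 e (Finset.mem_singleton_self e)))
      calc 2 * S.card = ∑ β ∈ S, (β.biUnion symEnds).card := by
            rw [Finset.sum_congr rfl hcards, Finset.sum_const, smul_eq_mul, mul_comm]
        _ = (S.biUnion (fun β => β.biUnion symEnds)).card := (Finset.card_biUnion hdisj).symm
        _ ≤ Fintype.card V := Finset.card_le_univ _
    rw [hcardV] at key
    omega
end
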